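/- Let p be an odd prime and n ≥ 2. Then the family of complex matrices (R_n(T))_{T ∈ Σ₃(p)}, indexed by the elements T of Σ₃(p), is linearly independent over ℂ. -/

import Mathlib

/-!
Since `𝟙₆ ∈ T` and `dim T = 3`, each `T ∈ Σ₃(p)` is spanned by `𝟙₆` and `n ≥ 2` of its vectors
`t₁, …, tₙ`. As `𝟙₆` lies in every member of `Σ₃(p)` and all members have dimension 3, `T` is the
only member containing every `tₖ`. Hence at the entry `x = (tₖ.1)ₖ`, `y = (tₖ.2)ₖ` the matrix
`R_n(T)` is 1 and every other `R_n(S)` is 0: the family is biorthogonal to point evaluations.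
-/

/-- The 6-dimensional phase space `V₆ = (Fin 3 → ZMod p) × (Fin 3 → ZMod p)`. -/
abbrev V6 (p : ℕ) := (Fin 3 → ZMod p) × (Fin 3 → ZMod p)

/-- Dot product on `Fin 3 → ZMod p`. -/
def dotP {p : ℕ} (x y : Fin 3 → ZMod p) : ZMod p := ∑ i, x i * y i

/-- The bilinear form `β((x⃗,y⃗),(x⃗',y⃗')) = x⃗·x⃗' − y⃗·y⃗'`. -/
def betaF {p : ℕ} (v w : V6 p) : ZMod p := dotP v.1 w.1 - dotP v.2 w.2

/-- The all-ones vector `𝟙₆`. -/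
def onesV (p : ℕ) : V6 p := (fun _ => 1, fun _ => 1)

/-- `Σ₃(p)`: the set of Lagrangian stochastic subspaces of `V₆`. -/
def Sigma3 (p : ℕ) : Set (Submodule (ZMod p) (V6 p)) :=
  {T | Module.finrank (ZMod p) T = 3 ∧ (∀ v ∈ T, ∀ w ∈ T, betaF v w = 0) ∧ onesV p ∈ T}

open Classical in
/-- The matrix `R_n(T)` with `R_n(T)_{x,y} = ∏_{k < n} [ (x k, y k) ∈ T ]`. -/
noncomputable def RN (p n : ℕ) (T : Submodule (ZMod p) (V6 p)) :
    Matrix (Fin n → Fin 3 → ZMod p) (Fin n → Fin 3 → ZMod p) ℂ :=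
  fun x y => ∏ k : Fin n, if ((x k, y k) : V6 p) ∈ T then 1 else 0

theorem Matrix.linearIndependent_of_apply_eq_ite {ι m n R : Type*} [Semiring R] [DecidableEq ι]
    (A : ι → Matrix m n R) (x : ι → m) (y : ι → n)
    (h : ∀ i j, A j (x i) (y i) = if j = i then 1 else 0) : LinearIndependent R A := by
  let eval : Matrix m n R →ₗ[R] ι → R := LinearMap.pi fun i => entryLinearMap R R (x i) (y i)
  refine LinearIndependent.of_comp eval ?_
  convert Pi.linearIndependent_single_one ι R with j
  ext i
  simp [eval, h, Pi.single_apply, eq_comm]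

theorem Submodule.exists_sup_span_range_eq {K V : Type*} [DivisionRing K] [AddCommGroup V]
    [Module K V] [FiniteDimensional K V] {T : Submodule K V} (k : ℕ) :
    ∀ W ≤ T, Module.finrank K T ≤ Module.finrank K W + k →
      ∃ t : Fin k → V, (∀ i, t i ∈ T) ∧ W ⊔ span K (Set.range t) = T := by
  induction k with
  | zero =>
    intro W hWT hrank
    exact ⟨Fin.elim0, fun i => i.elim0, by simpa using eq_of_le_of_finrank_le hWT hrank⟩
  | succ k ih =>
    intro W hWT hrank
    by_cases hW : W = T
    · exact ⟨0, fun _ => T.zero_mem, by simp [hW]⟩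
    obtain ⟨t₀, ht₀T, ht₀W⟩ := SetLike.exists_of_lt (lt_of_le_of_ne hWT hW)
    have hlt : W < W ⊔ span K {t₀} :=
      SetLike.lt_iff_le_and_exists.mpr
        ⟨le_sup_left, t₀, mem_sup_right (mem_span_singleton_self t₀), ht₀W⟩
    obtain ⟨t, htT, hspan⟩ := ih (W ⊔ span K {t₀})
      (sup_le hWT ((span_singleton_le_iff_mem _ _).mpr ht₀T))
      (by have := finrank_lt_finrank_of_lt hlt; omega)
    refine ⟨Fin.cons t₀ t, Fin.cases ht₀T htT, ?_⟩
    rw [Fin.range_cons, span_insert, ← sup_assoc, hspan]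

open Classical in
theorem RN_apply_fst_snd (p n : ℕ) (S : Submodule (ZMod p) (V6 p)) (w : Fin n → V6 p) :
    RN p n S (fun k => (w k).1) (fun k => (w k).2) = if ∀ k, w k ∈ S then 1 else 0 := by
  simp [RN, Finset.prod_ite_zero]

theorem onesV_ne_zero (p : ℕ) [Fact p.Prime] : onesV p ≠ 0 :=
  fun h => one_ne_zero (congrFun (congrArg Prod.fst h) 0)

theorem exists_forall_mem_iff_eq_of_mem_Sigma3 {p n : ℕ} [Fact p.Prime]
    {T : Submodule (ZMod p) (V6 p)} (hT : T ∈ Sigma3 p) (hn : 2 ≤ n) :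
    ∃ t : Fin n → V6 p, ∀ S ∈ Sigma3 p, (∀ k, t k ∈ S) ↔ S = T := by
  obtain ⟨hrank, -, hones⟩ := hT
  obtain ⟨t, htT, hspan⟩ := Submodule.exists_sup_span_range_eq n (Submodule.span _ {onesV p})
    ((Submodule.span_singleton_le_iff_mem _ _).mpr hones)
    (by rw [hrank, finrank_span_singleton (onesV_ne_zero p)]; omega)
  refine ⟨t, fun S hS => ⟨fun htS => ?_, fun hST => hST ▸ htT⟩⟩
  have hTS : T ≤ S := hspan ▸ sup_le ((Submodule.span_singleton_le_iff_mem _ _).mpr hS.2.2)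
    (Submodule.span_le.mpr (Set.range_subset_iff.mpr htS))
  exact (Submodule.eq_of_le_of_finrank_le hTS (by rw [hrank, hS.1])).symm

theorem linearIndependent_RN_general (p n : ℕ) [Fact p.Prime] (hn : 2 ≤ n) :
    LinearIndependent ℂ (fun T : (Sigma3 p) => RN p n (T : Submodule (ZMod p) (V6 p))) := by
  classical
  choose t ht using fun T : Sigma3 p => exists_forall_mem_iff_eq_of_mem_Sigma3 T.2 hn
  refine Matrix.linearIndependent_of_apply_eq_ite _ (fun T k => (t T k).1) (fun T k => (t T k).2)
    fun T S => ?_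
  simp only [RN_apply_fst_snd, ht T S S.2, Subtype.ext_iff]

/-- For `p` an odd prime and `n ≥ 2`, the family of matrices `(R_n(T))_{T ∈ Σ₃(p)}`
is linearly independent over `ℂ`. -/
theorem linearIndependent_RN (p n : ℕ) [Fact p.Prime] (hodd : p ≠ 2) (hn : 2 ≤ n) :
    LinearIndependent ℂ (fun T : (Sigma3 p) => RN p n (T : Submodule (ZMod p) (V6 p))) :=
  linearIndependent_RN_general p n hn
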